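/- In the one-step transmission model with binary DRPM encoding, for every w ∈ [M] the quantity P̂_Y(y) − Π(w)·Σ_{x∈{0,1}} Q(y|x,σ(w))·ē(x|w) is strictly positive for all y ∈ 𝒴, and the conditional one-step drift satisfies E[L₁ − L₀ | W=w] ≥ log(1 − Π(w)) + E[ log( Q(Y|X,σ(w)) / ( P̂_Y(Y) − Π(w)·Σ_{x∈{0,1}} Q(Y|x,σ(w))·ē(x|w) ) ) | W=w ], where ē(x|w) = P( e(w, V^{σ(w)}) = x ). -/

import Mathlib

open MeasureTheory Finset
set_option linter.unusedSectionVars false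

/-- Product of uniform measures on `[0,1)`, one per state: the law of the
common randomness vector `V = (V^s)_{s ∈ 𝒮}`. -/
noncomputable def uniformPi (S : Type*) [Fintype S] : Measure (S → ℝ) :=
  Measure.pi fun _ => (volume : Measure ℝ).restrict (Set.Ico (0:ℝ) 1)

/-- `B̂(s) = Σ_{i : σ(i) = s} Π(i)`. -/
noncomputable def Bhat {S : Type*} [DecidableEq S] {M : ℕ}
    (Pi : Fin M → ℝ) (σ : Fin M → S) (s : S) : ℝ :=
  ∑ i, if σ i = s then Pi i else 0

/-- `Π^s(i) = Π(i)·1[σ(i)=s] / B̂(s)`. -/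
noncomputable def condPi {S : Type*} [DecidableEq S] {M : ℕ}
    (Pi : Fin M → ℝ) (σ : Fin M → S) (s : S) (i : Fin M) : ℝ :=
  (if σ i = s then Pi i else 0) / Bhat Pi σ s

/-- Left endpoint of the interval `I_i` in the partition of `[0,1)` into
consecutive intervals of lengths `Π^{σ(i)}(j)` over messages `j` with
`σ(j) = σ(i)`, in increasing order of `j`. -/
noncomputable def ileft {S : Type*} [DecidableEq S] {M : ℕ}
    (Pi : Fin M → ℝ) (σ : Fin M → S) (i : Fin M) : ℝ :=
  ∑ j ∈ Finset.univ.filter (fun j => j < i ∧ σ j = σ i), condPi Pi σ (σ i) j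

/-- `a_i = |I_i ∩ [0, P_X(0|σ(i)))|` (Lebesgue measure of the intersection). -/
noncomputable def aCoef {S : Type*} [DecidableEq S] {M : ℕ}
    (Pi : Fin M → ℝ) (σ : Fin M → S) (PX : Fin 2 → S → ℝ) (i : Fin M) : ℝ :=
  min (ileft Pi σ i + condPi Pi σ (σ i) i) (PX 0 (σ i)) -
    min (ileft Pi σ i) (PX 0 (σ i))

/-- The binary DRPM encoder: `e(i,v) = 0` if `v·Π^{σ(i)}(i) < a_i`, else `1`. -/
noncomputable def enc {S : Type*} [DecidableEq S] {M : ℕ}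
    (Pi : Fin M → ℝ) (σ : Fin M → S) (PX : Fin 2 → S → ℝ) (i : Fin M) (v : ℝ) : Fin 2 :=
  if v * condPi Pi σ (σ i) i < aCoef Pi σ PX i then 0 else 1

/-- `P̂_Y(y) = Σ_{x∈{0,1}} Σ_{s : B̂(s)>0} Q(y|x,s) P_X(x|s) B̂(s)`. -/
noncomputable def PhatY {Y S : Type*} [Fintype S] [DecidableEq S] {M : ℕ}
    (Pi : Fin M → ℝ) (σ : Fin M → S) (PX : Fin 2 → S → ℝ)
    (Q : Y → Fin 2 → S → ℝ) (y : Y) : ℝ :=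
  ∑ x : Fin 2, ∑ s : S, if 0 < Bhat Pi σ s then Q y x s * PX x s * Bhat Pi σ s else 0

/-- The one-step posterior `Π₁(i)` as a function of the common randomness `v`
and the channel output `y`. -/
noncomputable def post {Y S : Type*} [DecidableEq S] {M : ℕ}
    (Pi : Fin M → ℝ) (σ : Fin M → S) (PX : Fin 2 → S → ℝ)
    (Q : Y → Fin 2 → S → ℝ) (v : S → ℝ) (y : Y) (i : Fin M) : ℝ :=
  Q y (enc Pi σ PX i (v (σ i))) (σ i) * Pi i /
    ∑ j, Q y (enc Pi σ PX j (v (σ j))) (σ j) * Pi j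

/-- Log-likelihood ratio `log(p/(1-p))`. -/
noncomputable def llr (p : ℝ) : ℝ := Real.log (p / (1 - p))

/-- `ē(x|w) = P(e(w, V^{σ(w)}) = x)`. -/
noncomputable def encAvg {S : Type*} [Fintype S] [DecidableEq S] {M : ℕ}
    (Pi : Fin M → ℝ) (σ : Fin M → S) (PX : Fin 2 → S → ℝ) (w : Fin M) (x : Fin 2) : ℝ :=
  ∫ v, (if enc Pi σ PX w (v (σ w)) = x then (1:ℝ) else 0) ∂ uniformPi S

noncomputable def unif : Measure ℝ := (volume : Measure ℝ).restrict (Set.Ico (0:ℝ) 1)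

instance : IsProbabilityMeasure unif := ⟨by simp [unif]⟩

instance instProbUnifRestrict : IsProbabilityMeasure ((volume : Measure ℝ).restrict (Set.Ico (0:ℝ) 1)) := ⟨by simp⟩

instance (S : Type*) [Fintype S] : IsProbabilityMeasure (uniformPi S) := by
  unfold uniformPi; infer_instance

example {M : ℕ} (H : (Fin M → Fin 2) → ℝ) : Measurable H := measurable_of_countable H

theorem uniformPi_map_eval (S : Type*) [Fintype S] [DecidableEq S] (s : S) :
    (uniformPi S).map (fun v => v s) = unif := by
  ext A hA
  rw [Measure.map_apply (measurable_pi_apply s) hA]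
  have hpre : (fun v : S → ℝ => v s) ⁻¹' A =
      Set.pi Set.univ (fun i => if i = s then A else Set.univ) := by
    ext v
    simp only [Set.mem_preimage, Set.mem_univ_pi]
    constructor
    · intro h i
      by_cases hi : i = s
      · subst hi; simpa using h
      · simp [hi]
    · intro h
      have := h s
      simpa using this
  rw [hpre]
  show Measure.pi _ _ = _
  rw [Measure.pi_pi]
  have hval : ∀ i : S, ((volume : Measure ℝ).restrict (Set.Ico (0:ℝ) 1)) (if i = s then A else Set.univ)
      = if i = s then unif A else 1 := by
    intro i; by_cases hi : i = s
    · simp [hi, unif]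
    · simp [hi]
  simp_rw [hval]
  rw [Finset.prod_ite_eq' Finset.univ s (fun _ => unif A)]
  simp

theorem uniformPi_map_pair (S : Type*) [Fintype S] [DecidableEq S] {s t : S} (hst : s ≠ t) :
    (uniformPi S).map (fun v => (v s, v t)) = unif.prod unif := by
  refine (Measure.prod_eq fun A B hA hB => ?_).symm
  rw [Measure.map_apply ((measurable_pi_apply s).prodMk (measurable_pi_apply t)) (hA.prod hB)]
  have hpre : (fun v : S → ℝ => (v s, v t)) ⁻¹' (A ×ˢ B) =
      Set.pi Set.univ (fun i => if i = s then A else if i = t then B else Set.univ) := by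
    ext v
    simp only [Set.mem_preimage, Set.mem_prod, Set.mem_univ_pi]
    constructor
    · rintro ⟨h1, h2⟩ i
      by_cases hi : i = s
      · subst hi; simpa using h1
      · by_cases hi' : i = t
        · subst hi'; simp [hi, h2]
        · simp [hi, hi']
    · intro h
      constructor
      · have := h s; simpa using this
      · have := h t; simpa [Ne.symm hst] using this
  rw [hpre]
  show Measure.pi _ _ = _
  rw [Measure.pi_pi]
  have hval : ∀ i : S, ((volume : Measure ℝ).restrict (Set.Ico (0:ℝ) 1)) (if i = s then A else if i = t then B else Set.univ)
      = if i = s then unif A else if i = t then unif B else 1 := by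
    intro i
    by_cases hi : i = s
    · simp [hi, unif]
    · by_cases hi' : i = t
      · simp [hi, hi', unif, Ne.symm hst]
      · simp [hi, hi']
  simp_rw [hval]
  rw [← Finset.prod_subset (Finset.subset_univ ({s, t} : Finset S))
      (fun i _ hi => ?_), Finset.prod_pair hst]
  · simp [hst, Ne.symm hst]
  · simp only [Finset.mem_insert, Finset.mem_singleton] at hi
    push_neg at hi
    simp [hi.1, hi.2]

theorem integral_eval {S : Type*} [Fintype S] [DecidableEq S] (s : S) (F : ℝ → ℝ) (hF : Measurable F) :
    ∫ v, F (v s) ∂ uniformPi S = ∫ u, F u ∂ unif := by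
  rw [← uniformPi_map_eval S s,
    integral_map (measurable_pi_apply s).aemeasurable hF.aestronglyMeasurable]

theorem integral_eval_pair {S : Type*} [Fintype S] [DecidableEq S] {s t : S} (hst : s ≠ t)
    (F G : ℝ → ℝ) (hF : Measurable F) (hG : Measurable G) :
    ∫ v, F (v s) * G (v t) ∂ uniformPi S = (∫ u, F u ∂ unif) * ∫ u, G u ∂ unif := by
  have h1 : ∫ v, F (v s) * G (v t) ∂ uniformPi S
      = ∫ z : ℝ × ℝ, F z.1 * G z.2 ∂ (unif.prod unif) := by
    rw [← uniformPi_map_pair S hst,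
      integral_map ((measurable_pi_apply s).prodMk (measurable_pi_apply t)).aemeasurable
        (((hF.comp measurable_fst).mul (hG.comp measurable_snd)).aestronglyMeasurable)]
  rw [h1, integral_prod_mul]

theorem integral_unif_ite (t b d : ℝ) (h0 : 0 ≤ t) (h1 : t ≤ 1) :
    ∫ u, (if u < t then b else d) ∂ unif = t * b + (1 - t) * d := by
  have hIco : Set.Ico (0:ℝ) 1 = Set.Ico 0 t ∪ Set.Ico t 1 := (Set.Ico_union_Ico_eq_Ico h0 h1).symm
  have hdisj : Disjoint (Set.Ico (0:ℝ) t) (Set.Ico t 1) := Set.Ico_disjoint_Ico_same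
  have hint1 : IntegrableOn (fun u => if u < t then b else d) (Set.Ico (0:ℝ) t) volume := by
    refine IntegrableOn.congr_fun
      ((integrableOn_const_iff (C := b)).2 (Or.inr measure_Ico_lt_top)) ?_ measurableSet_Ico
    intro u hu; exact (if_pos hu.2).symm
  have hint2 : IntegrableOn (fun u => if u < t then b else d) (Set.Ico t (1:ℝ)) volume := by
    refine IntegrableOn.congr_fun
      ((integrableOn_const_iff (C := d)).2 (Or.inr measure_Ico_lt_top)) ?_ measurableSet_Ico
    intro u hu; exact (if_neg (not_lt.2 hu.1)).symm
  show (∫ u in Set.Ico (0:ℝ) 1, (if u < t then b else d)) = t * b + (1 - t) * d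
  rw [hIco, setIntegral_union hdisj measurableSet_Ico hint1 hint2,
    setIntegral_congr_fun measurableSet_Ico (fun u (hu : u ∈ Set.Ico (0:ℝ) t) => if_pos hu.2),
    setIntegral_congr_fun measurableSet_Ico
      (fun u (hu : u ∈ Set.Ico t (1:ℝ)) => if_neg (not_lt.2 hu.1)),
    setIntegral_const, setIntegral_const, Real.volume_real_Ico_of_le h0,
    Real.volume_real_Ico_of_le h1]
  simp only [smul_eq_mul]
  ring

section model

variable {Y S : Type*} [Fintype Y] [Fintype S] [DecidableEq S] {M : ℕ}
variable (Pi : Fin M → ℝ) (σ : Fin M → S) (PX : Fin 2 → S → ℝ) (Q : Y → Fin 2 → S → ℝ)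

noncomputable def thr (i : Fin M) : ℝ := aCoef Pi σ PX i / condPi Pi σ (σ i) i

noncomputable def Qbar (y : Y) (j : Fin M) : ℝ :=
  Q y 0 (σ j) * thr Pi σ PX j + Q y 1 (σ j) * (1 - thr Pi σ PX j)

theorem Bhat_pos (hp : ∀ i, 0 < Pi i) {s : S} {i0 : Fin M} (h : σ i0 = s) :
    0 < Bhat Pi σ s := by
  unfold Bhat
  have h1 : (if σ i0 = s then Pi i0 else 0) ≤ ∑ i, if σ i = s then Pi i else 0 :=
    Finset.single_le_sum (f := fun i => if σ i = s then Pi i else 0)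
      (fun i _ => by by_cases hi : σ i = s <;> simp [hi, (hp i).le]) (mem_univ i0)
  rw [if_pos h] at h1
  linarith [hp i0]

theorem Bhat_nonneg (hp : ∀ i, 0 < Pi i) (s : S) : 0 ≤ Bhat Pi σ s := by
  unfold Bhat
  exact Finset.sum_nonneg fun i _ => by by_cases hi : σ i = s <;> simp [hi, (hp i).le]

theorem condPi_self (j : Fin M) : condPi Pi σ (σ j) j = Pi j / Bhat Pi σ (σ j) := by
  unfold condPi; rw [if_pos rfl]

theorem condPi_self_pos (hp : ∀ i, 0 < Pi i) (j : Fin M) : 0 < condPi Pi σ (σ j) j := by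
  rw [condPi_self]
  exact div_pos (hp j) (Bhat_pos Pi σ hp rfl)

theorem condPi_nonneg (hp : ∀ i, 0 < Pi i) (s : S) (j : Fin M) : 0 ≤ condPi Pi σ s j := by
  unfold condPi
  refine div_nonneg ?_ (Bhat_nonneg Pi σ hp s)
  by_cases hj : σ j = s <;> simp [hj, (hp j).le]

theorem sum_condPi (hp : ∀ i, 0 < Pi i) (i0 : Fin M) :
    ∑ j ∈ univ.filter (fun j => σ j = σ i0), condPi Pi σ (σ i0) j = 1 := by
  have hB : 0 < Bhat Pi σ (σ i0) := Bhat_pos Pi σ hp rfl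
  unfold condPi
  rw [← Finset.sum_div]
  rw [Finset.sum_congr rfl (fun j hj => if_pos ((Finset.mem_filter.1 hj).2))]
  have : ∑ j ∈ univ.filter (fun j => σ j = σ i0), Pi j = Bhat Pi σ (σ i0) := by
    rw [Finset.sum_filter]; rfl
  rw [this, div_self hB.ne']

theorem aCoef_nonneg (hp : ∀ i, 0 < Pi i) (i : Fin M) : 0 ≤ aCoef Pi σ PX i := by
  have hc := condPi_self_pos Pi σ hp i
  unfold aCoef
  have := min_le_min (le_add_of_nonneg_right hc.le : ileft Pi σ i ≤ ileft Pi σ i + condPi Pi σ (σ i) i) (le_refl (PX 0 (σ i)))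
  linarith

theorem aCoef_le (hp : ∀ i, 0 < Pi i) (i : Fin M) :
    aCoef Pi σ PX i ≤ condPi Pi σ (σ i) i := by
  have hc := condPi_self_pos Pi σ hp i
  unfold aCoef
  have h1 : min (ileft Pi σ i + condPi Pi σ (σ i) i) (PX 0 (σ i))
      ≤ min (ileft Pi σ i + condPi Pi σ (σ i) i) (PX 0 (σ i) + condPi Pi σ (σ i) i) :=
    min_le_min (le_refl _) (le_add_of_nonneg_right hc.le)
  rw [min_add_add_right] at h1
  linarith

theorem thr_nonneg (hp : ∀ i, 0 < Pi i) (i : Fin M) : 0 ≤ thr Pi σ PX i :=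
  div_nonneg (aCoef_nonneg Pi σ PX hp i) (condPi_self_pos Pi σ hp i).le

theorem thr_le_one (hp : ∀ i, 0 < Pi i) (i : Fin M) : thr Pi σ PX i ≤ 1 :=
  (div_le_one (condPi_self_pos Pi σ hp i)).2 (aCoef_le Pi σ PX hp i)

theorem enc_thr (hp : ∀ i, 0 < Pi i) (i : Fin M) (v : ℝ) :
    enc Pi σ PX i v = if v < thr Pi σ PX i then 0 else 1 := by
  have hc := condPi_self_pos Pi σ hp i
  unfold enc thr
  split_ifs with h1 h2 h2
  · rfl
  · exact absurd ((lt_div_iff₀ hc).2 h1) h2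
  · exact absurd ((lt_div_iff₀ hc).1 h2) h1
  · rfl

theorem measurable_enc (i : Fin M) : Measurable (enc Pi σ PX i) := by
  unfold enc
  exact Measurable.ite (measurableSet_lt (measurable_id.mul_const _) measurable_const)
    measurable_const measurable_const

theorem measQ (y : Y) (i : Fin M) :
    Measurable (fun u => Q y (enc Pi σ PX i u) (σ i)) :=
  (measurable_of_countable (fun b : Fin 2 => Q y b (σ i))).comp (measurable_enc Pi σ PX i)

theorem oneDim (hp : ∀ i, 0 < Pi i) (y : Y) (i : Fin M) :
    ∫ u, Q y (enc Pi σ PX i u) (σ i) ∂ unif = Qbar Pi σ PX Q y i := by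
  have h1 : (fun u => Q y (enc Pi σ PX i u) (σ i))
      = fun u => if u < thr Pi σ PX i then Q y 0 (σ i) else Q y 1 (σ i) := by
    funext u
    rw [enc_thr Pi σ PX hp i u]
    by_cases h : u < thr Pi σ PX i <;> simp [h]
  rw [h1, integral_unif_ite _ _ _ (thr_nonneg Pi σ PX hp i) (thr_le_one Pi σ PX hp i)]
  unfold Qbar; ring

theorem integral_Qj (hp : ∀ i, 0 < Pi i) (y : Y) (j : Fin M) :
    ∫ v, Q y (enc Pi σ PX j (v (σ j))) (σ j) ∂ uniformPi S = Qbar Pi σ PX Q y j :=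
  (integral_eval (σ j) (fun u => Q y (enc Pi σ PX j u) (σ j)) (measQ Pi σ PX Q y j)).trans
    (oneDim Pi σ PX Q hp y j)

theorem encAvg_zero (hp : ∀ i, 0 < Pi i) (w : Fin M) :
    encAvg Pi σ PX w 0 = thr Pi σ PX w := by
  unfold encAvg
  have hm : Measurable fun u => if enc Pi σ PX w u = (0 : Fin 2) then (1:ℝ) else 0 :=
    (measurable_of_countable (fun b : Fin 2 => if b = 0 then (1:ℝ) else 0)).comp
      (measurable_enc Pi σ PX w)
  refine (integral_eval (σ w) (fun u => if enc Pi σ PX w u = (0 : Fin 2) then (1:ℝ) else 0) hm).trans ?_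
  have h1 : (fun u => if enc Pi σ PX w u = (0 : Fin 2) then (1:ℝ) else 0)
      = fun u => if u < thr Pi σ PX w then (1:ℝ) else 0 := by
    funext u
    rw [enc_thr Pi σ PX hp w u]
    by_cases h : u < thr Pi σ PX w <;> simp [h]
  rw [h1, integral_unif_ite _ _ _ (thr_nonneg Pi σ PX hp w) (thr_le_one Pi σ PX hp w)]
  ring

theorem encAvg_one (hp : ∀ i, 0 < Pi i) (w : Fin M) :
    encAvg Pi σ PX w 1 = 1 - thr Pi σ PX w := by
  unfold encAvg
  have hm : Measurable fun u => if enc Pi σ PX w u = (1 : Fin 2) then (1:ℝ) else 0 :=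
    (measurable_of_countable (fun b : Fin 2 => if b = 1 then (1:ℝ) else 0)).comp
      (measurable_enc Pi σ PX w)
  refine (integral_eval (σ w) (fun u => if enc Pi σ PX w u = (1 : Fin 2) then (1:ℝ) else 0) hm).trans ?_
  have h1 : (fun u => if enc Pi σ PX w u = (1 : Fin 2) then (1:ℝ) else 0)
      = fun u => if u < thr Pi σ PX w then (0:ℝ) else 1 := by
    funext u
    rw [enc_thr Pi σ PX hp w u]
    by_cases h : u < thr Pi σ PX w <;> simp [h]
  rw [h1, integral_unif_ite _ _ _ (thr_nonneg Pi σ PX hp w) (thr_le_one Pi σ PX hp w)]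
  ring

end model

section model2

variable {Y S : Type*} [Fintype Y] [Fintype S] [DecidableEq S] {M : ℕ}
variable (Pi : Fin M → ℝ) (σ : Fin M → S) (PX : Fin 2 → S → ℝ) (Q : Y → Fin 2 → S → ℝ)

theorem telescope (F : Finset (Fin M)) (c : Fin M → ℝ) (m : ℝ → ℝ) :
    ∑ j ∈ F, (m ((∑ k ∈ F.filter (fun k => k < j), c k) + c j)
        - m (∑ k ∈ F.filter (fun k => k < j), c k))
      = m (∑ j ∈ F, c j) - m 0 := by
  induction F using Finset.induction_on_max with
  | empty => simp
  | insert a s ha ih =>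
    have ha' : a ∉ s := fun h => lt_irrefl a (ha a h)
    have hfa : (insert a s).filter (fun k => k < a) = s := by
      rw [Finset.filter_insert, if_neg (lt_irrefl a)]
      exact Finset.filter_true_of_mem ha
    have hfj : ∀ j ∈ s, (insert a s).filter (fun k => k < j) = s.filter (fun k => k < j) := by
      intro j hj
      rw [Finset.filter_insert, if_neg (lt_asymm (ha j hj))]
    rw [Finset.sum_insert ha', hfa]
    have hsum : ∑ j ∈ s, (m ((∑ k ∈ (insert a s).filter (fun k => k < j), c k) + c j)
          - m (∑ k ∈ (insert a s).filter (fun k => k < j), c k))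
        = ∑ j ∈ s, (m ((∑ k ∈ s.filter (fun k => k < j), c k) + c j)
          - m (∑ k ∈ s.filter (fun k => k < j), c k)) :=
      Finset.sum_congr rfl fun j hj => by rw [hfj j hj]
    rw [hsum, ih, Finset.sum_insert ha', add_comm (c a) (∑ k ∈ s, c k)]
    ring

theorem filter_lt_eq (i0 : Fin M) (j : Fin M) :
    Finset.filter (fun k => k < j ∧ σ k = σ i0) univ
      = (univ.filter (fun k => σ k = σ i0)).filter (fun k => k < j) := by
  rw [Finset.filter_filter]
  exact Finset.filter_congr fun x _ => and_comm

theorem sum_aCoef (hp : ∀ i, 0 < Pi i)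
    (hPX : ∀ s, 0 < Bhat Pi σ s → (∀ x, 0 ≤ PX x s) ∧ PX 0 s + PX 1 s = 1) (i0 : Fin M) :
    ∑ j ∈ univ.filter (fun j => σ j = σ i0), aCoef Pi σ PX j = PX 0 (σ i0) := by
  have hB : 0 < Bhat Pi σ (σ i0) := Bhat_pos Pi σ hp rfl
  obtain ⟨hPX0, hPXsum⟩ := hPX (σ i0) hB
  have hq0 : 0 ≤ PX 0 (σ i0) := hPX0 0
  have hq1 : PX 0 (σ i0) ≤ 1 := by have := hPX0 1; linarith
  have key : ∀ j ∈ univ.filter (fun j => σ j = σ i0),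
      aCoef Pi σ PX j =
        (fun z => min z (PX 0 (σ i0)))
            ((∑ k ∈ (univ.filter (fun k => σ k = σ i0)).filter (fun k => k < j),
              condPi Pi σ (σ i0) k) + condPi Pi σ (σ i0) j)
          - (fun z => min z (PX 0 (σ i0)))
            (∑ k ∈ (univ.filter (fun k => σ k = σ i0)).filter (fun k => k < j),
              condPi Pi σ (σ i0) k) := by
    intro j hj
    have hsj : σ j = σ i0 := (Finset.mem_filter.1 hj).2
    unfold aCoef ileft
    rw [hsj, filter_lt_eq σ i0 j]
  rw [Finset.sum_congr rfl key,
    telescope (univ.filter (fun k => σ k = σ i0)) (condPi Pi σ (σ i0)) (fun z => min z (PX 0 (σ i0))),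
    sum_condPi Pi σ hp i0]
  show min 1 (PX 0 (σ i0)) - min 0 (PX 0 (σ i0)) = PX 0 (σ i0)
  rw [min_eq_right hq1, min_eq_left hq0, sub_zero]

theorem Pi_mul_thr (hp : ∀ i, 0 < Pi i) (j : Fin M) :
    Pi j * thr Pi σ PX j = Bhat Pi σ (σ j) * aCoef Pi σ PX j := by
  have hB : 0 < Bhat Pi σ (σ j) := Bhat_pos Pi σ hp rfl
  have hj : Pi j ≠ 0 := (hp j).ne'
  unfold thr
  rw [condPi_self]
  field_simp

theorem Qbar_pos (hp : ∀ i, 0 < Pi i) (hQpos : ∀ y x s, 0 < Q y x s) (y : Y) (j : Fin M) :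
    0 < Qbar Pi σ PX Q y j := by
  have h0 := thr_nonneg Pi σ PX hp j
  have h1 := thr_le_one Pi σ PX hp j
  have hm0 : min (Q y 0 (σ j)) (Q y 1 (σ j)) ≤ Q y 0 (σ j) := min_le_left _ _
  have hm1 : min (Q y 0 (σ j)) (Q y 1 (σ j)) ≤ Q y 1 (σ j) := min_le_right _ _
  have hmin : 0 < min (Q y 0 (σ j)) (Q y 1 (σ j)) := lt_min (hQpos _ _ _) (hQpos _ _ _)
  have : min (Q y 0 (σ j)) (Q y 1 (σ j)) ≤ Qbar Pi σ PX Q y j := by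
    unfold Qbar
    nlinarith [mul_nonneg (sub_nonneg.2 hm0) h0,
      mul_nonneg (sub_nonneg.2 hm1) (by linarith : (0:ℝ) ≤ 1 - thr Pi σ PX j)]
  linarith

theorem PhatY_eq (hp : ∀ i, 0 < Pi i)
    (hPX : ∀ s, 0 < Bhat Pi σ s → (∀ x, 0 ≤ PX x s) ∧ PX 0 s + PX 1 s = 1) (y : Y) :
    PhatY Pi σ PX Q y = ∑ j, Pi j * Qbar Pi σ PX Q y j := by
  rw [← Finset.sum_fiberwise_of_maps_to (g := σ) (fun j (_ : j ∈ univ) => mem_univ (σ j))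
    (fun j => Pi j * Qbar Pi σ PX Q y j)]
  unfold PhatY
  rw [Fin.sum_univ_two, ← Finset.sum_add_distrib]
  apply Finset.sum_congr rfl
  intro s _
  by_cases hB : 0 < Bhat Pi σ s
  · rw [if_pos hB, if_pos hB]
    have hBne : Bhat Pi σ s ≠ 0 := hB.ne'
    obtain ⟨i0, hi0mem, hi0ne⟩ : ∃ i0 ∈ (univ : Finset (Fin M)), (if σ i0 = s then Pi i0 else 0) ≠ 0 := by
      apply Finset.exists_ne_zero_of_sum_ne_zero
      exact hB.ne'
    have hi0 : σ i0 = s := by by_contra h; simp [h] at hi0ne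
    obtain ⟨hPX0, hPXs⟩ := hPX s hB
    have hq := sum_aCoef Pi σ PX hp hPX i0
    rw [hi0] at hq
    have hPisum : ∑ j ∈ univ.filter (fun j => σ j = s), Pi j = Bhat Pi σ s := by
      rw [Finset.sum_filter]; rfl
    have hterm : ∀ j ∈ univ.filter (fun j => σ j = s), Pi j * Qbar Pi σ PX Q y j
        = Q y 0 s * (Bhat Pi σ s * aCoef Pi σ PX j)
          + Q y 1 s * (Pi j - Bhat Pi σ s * aCoef Pi σ PX j) := by
      intro j hj
      have hsj : σ j = s := (Finset.mem_filter.1 hj).2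
      have hthr : Pi j * thr Pi σ PX j = Bhat Pi σ s * aCoef Pi σ PX j := by
        rw [← hsj]; exact Pi_mul_thr Pi σ PX hp j
      unfold Qbar
      rw [hsj]
      linear_combination (Q y 0 s - Q y 1 s) * hthr
    rw [Finset.sum_congr rfl hterm, Finset.sum_add_distrib]
    have h2 : ∑ j ∈ univ.filter (fun j => σ j = s), Q y 0 s * (Bhat Pi σ s * aCoef Pi σ PX j)
        = Q y 0 s * (Bhat Pi σ s * PX 0 s) := by
      rw [← Finset.mul_sum, ← Finset.mul_sum, hq]
    have h3 : ∑ j ∈ univ.filter (fun j => σ j = s), Q y 1 s * (Pi j - Bhat Pi σ s * aCoef Pi σ PX j)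
        = Q y 1 s * (Bhat Pi σ s - Bhat Pi σ s * PX 0 s) := by
      rw [← Finset.mul_sum, Finset.sum_sub_distrib, hPisum, ← Finset.mul_sum, hq]
    rw [h2, h3]
    have hPX1 : PX 1 s = 1 - PX 0 s := by linarith
    rw [hPX1]; ring
  · rw [if_neg hB, if_neg hB]
    have hempty : univ.filter (fun j => σ j = s) = ∅ := by
      rw [Finset.filter_eq_empty_iff]
      intro j _ hsj
      exact hB (Bhat_pos Pi σ hp hsj)
    rw [hempty, Finset.sum_empty]
    norm_num

theorem thr_dichotomy (hp : ∀ i, 0 < Pi i) {i j : Fin M} (hij : i < j) (hs : σ i = σ j) :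
    thr Pi σ PX i = 1 ∨ thr Pi σ PX j = 0 := by
  have hci : 0 < condPi Pi σ (σ i) i := condPi_self_pos Pi σ hp i
  have hcj : 0 < condPi Pi σ (σ j) j := condPi_self_pos Pi σ hp j
  have hstep : ileft Pi σ i + condPi Pi σ (σ i) i ≤ ileft Pi σ j := by
    unfold ileft
    rw [← hs]
    have hsub : insert i (univ.filter fun k => k < i ∧ σ k = σ i)
        ⊆ univ.filter fun k => k < j ∧ σ k = σ i := by
      intro k hk
      rcases Finset.mem_insert.1 hk with rfl | hk'
      · exact Finset.mem_filter.2 ⟨mem_univ _, hij, rfl⟩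
      · obtain ⟨_, hk1, hk2⟩ := Finset.mem_filter.1 hk'
        exact Finset.mem_filter.2 ⟨mem_univ _, hk1.trans hij, hk2⟩
    have hnotmem : i ∉ univ.filter fun k => k < i ∧ σ k = σ i := by simp
    have hmono := Finset.sum_le_sum_of_subset_of_nonneg hsub
      (fun k _ _ => condPi_nonneg Pi σ hp (σ i) k)
    rw [Finset.sum_insert hnotmem] at hmono
    linarith
  by_cases hcase : ileft Pi σ i + condPi Pi σ (σ i) i ≤ PX 0 (σ i)
  · left
    have hl : ileft Pi σ i ≤ PX 0 (σ i) := le_trans (le_add_of_nonneg_right hci.le) hcase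
    unfold thr aCoef
    rw [min_eq_left hcase, min_eq_left hl, add_sub_cancel_left]
    exact div_self hci.ne'
  · right
    push_neg at hcase
    have h1 : PX 0 (σ j) ≤ ileft Pi σ j := by
      rw [← hs]; linarith
    unfold thr aCoef
    rw [min_eq_right (le_trans h1 (le_add_of_nonneg_right hcj.le)), min_eq_right h1]
    simp

end model2

section model3

variable {Y S : Type*} [Fintype Y] [Fintype S] [DecidableEq S] {M : ℕ}
variable (Pi : Fin M → ℝ) (σ : Fin M → S) (PX : Fin 2 → S → ℝ) (Q : Y → Fin 2 → S → ℝ)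

theorem enc_const_of_thr_one (hp : ∀ i, 0 < Pi i) {i : Fin M} (h : thr Pi σ PX i = 1) :
    ∀ u ∈ Set.Ico (0:ℝ) 1, enc Pi σ PX i u = 0 := by
  intro u hu
  rw [enc_thr Pi σ PX hp i u, h]
  exact if_pos hu.2

theorem enc_const_of_thr_zero (hp : ∀ i, 0 < Pi i) {i : Fin M} (h : thr Pi σ PX i = 0) :
    ∀ u ∈ Set.Ico (0:ℝ) 1, enc Pi σ PX i u = 1 := by
  intro u hu
  rw [enc_thr Pi σ PX hp i u, h]
  exact if_neg (not_lt.2 hu.1)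

theorem Qbar_of_thr_one {i : Fin M} (h : thr Pi σ PX i = 1) (y : Y) :
    Qbar Pi σ PX Q y i = Q y 0 (σ i) := by
  unfold Qbar; rw [h]; ring

theorem Qbar_of_thr_zero {i : Fin M} (h : thr Pi σ PX i = 0) (y : Y) :
    Qbar Pi σ PX Q y i = Q y 1 (σ i) := by
  unfold Qbar; rw [h]; ring

theorem unif_pair_const_left (hp : ∀ i, 0 < Pi i) (y : Y) (i j : Fin M) (x0 : Fin 2)
    (hc : ∀ u ∈ Set.Ico (0:ℝ) 1, enc Pi σ PX i u = x0)
    (hQb : Qbar Pi σ PX Q y i = Q y x0 (σ i)) :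
    ∫ u, Q y (enc Pi σ PX i u) (σ i) * Q y (enc Pi σ PX j u) (σ j) ∂ unif
      = Qbar Pi σ PX Q y i * Qbar Pi σ PX Q y j := by
  have h1 : ∫ u, Q y (enc Pi σ PX i u) (σ i) * Q y (enc Pi σ PX j u) (σ j) ∂ unif
      = ∫ u, Q y x0 (σ i) * Q y (enc Pi σ PX j u) (σ j) ∂ unif := by
    show (∫ u in Set.Ico (0:ℝ) 1, Q y (enc Pi σ PX i u) (σ i) * Q y (enc Pi σ PX j u) (σ j)) = _
    refine setIntegral_congr_fun measurableSet_Ico fun u hu => ?_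
    rw [hc u hu]
  rw [h1, integral_const_mul, oneDim Pi σ PX Q hp y j, hQb]

theorem unif_pair_const_right (hp : ∀ i, 0 < Pi i) (y : Y) (i j : Fin M) (x0 : Fin 2)
    (hc : ∀ u ∈ Set.Ico (0:ℝ) 1, enc Pi σ PX j u = x0)
    (hQb : Qbar Pi σ PX Q y j = Q y x0 (σ j)) :
    ∫ u, Q y (enc Pi σ PX i u) (σ i) * Q y (enc Pi σ PX j u) (σ j) ∂ unif
      = Qbar Pi σ PX Q y i * Qbar Pi σ PX Q y j := by
  have h1 : ∫ u, Q y (enc Pi σ PX i u) (σ i) * Q y (enc Pi σ PX j u) (σ j) ∂ unif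
      = ∫ u, Q y (enc Pi σ PX i u) (σ i) * Q y x0 (σ j) ∂ unif := by
    show (∫ u in Set.Ico (0:ℝ) 1, Q y (enc Pi σ PX i u) (σ i) * Q y (enc Pi σ PX j u) (σ j)) = _
    refine setIntegral_congr_fun measurableSet_Ico fun u hu => ?_
    rw [hc u hu]
  rw [h1, integral_mul_const, oneDim Pi σ PX Q hp y i, hQb]

theorem unif_pair (hp : ∀ i, 0 < Pi i) (y : Y) {i j : Fin M} (hij : i ≠ j)
    (hs : σ i = σ j) :
    ∫ u, Q y (enc Pi σ PX i u) (σ i) * Q y (enc Pi σ PX j u) (σ j) ∂ unif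
      = Qbar Pi σ PX Q y i * Qbar Pi σ PX Q y j := by
  rcases hij.lt_or_gt with hlt | hlt
  · rcases thr_dichotomy Pi σ PX hp hlt hs with h | h
    · exact unif_pair_const_left Pi σ PX Q hp y i j 0 (enc_const_of_thr_one Pi σ PX hp h)
        (Qbar_of_thr_one Pi σ PX Q h y)
    · exact unif_pair_const_right Pi σ PX Q hp y i j 1 (enc_const_of_thr_zero Pi σ PX hp h)
        (Qbar_of_thr_zero Pi σ PX Q h y)
  · rcases thr_dichotomy Pi σ PX hp hlt hs.symm with h | h
    · exact unif_pair_const_right Pi σ PX Q hp y i j 0 (enc_const_of_thr_one Pi σ PX hp h)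
        (Qbar_of_thr_one Pi σ PX Q h y)
    · exact unif_pair_const_left Pi σ PX Q hp y i j 1 (enc_const_of_thr_zero Pi σ PX hp h)
        (Qbar_of_thr_zero Pi σ PX Q h y)

theorem int_pair (hp : ∀ i, 0 < Pi i) (y : Y) {i j : Fin M} (hij : i ≠ j) :
    ∫ v, Q y (enc Pi σ PX i (v (σ i))) (σ i) * Q y (enc Pi σ PX j (v (σ j))) (σ j)
        ∂ uniformPi S
      = Qbar Pi σ PX Q y i * Qbar Pi σ PX Q y j := by
  by_cases hs : σ i = σ j
  · have hrw : (fun v : S → ℝ =>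
        Q y (enc Pi σ PX i (v (σ i))) (σ i) * Q y (enc Pi σ PX j (v (σ j))) (σ j))
        = fun v => (fun u => Q y (enc Pi σ PX i u) (σ i) * Q y (enc Pi σ PX j u) (σ j)) (v (σ i)) := by
      funext v
      rw [show v (σ j) = v (σ i) from by rw [hs]]
    rw [hrw, integral_eval (σ i) (fun u => Q y (enc Pi σ PX i u) (σ i) * Q y (enc Pi σ PX j u) (σ j)) ((measQ Pi σ PX Q y i).mul (measQ Pi σ PX Q y j))]
    exact unif_pair Pi σ PX Q hp y hij hs
  · have := integral_eval_pair (S := S) hs (fun u => Q y (enc Pi σ PX i u) (σ i))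
      (fun u => Q y (enc Pi σ PX j u) (σ j)) (measQ Pi σ PX Q y i) (measQ Pi σ PX Q y j)
    exact this.trans (by rw [oneDim Pi σ PX Q hp y i, oneDim Pi σ PX Q hp y j])

theorem integrable_model (H : (Fin M → Fin 2) → ℝ) :
    Integrable (fun v : S → ℝ => H (fun i => enc Pi σ PX i (v (σ i)))) (uniformPi S) := by
  have hmeas : Measurable fun v : S → ℝ => H (fun i => enc Pi σ PX i (v (σ i))) :=
    (measurable_of_countable H).comp
      (measurable_pi_lambda _ fun i => (measurable_enc Pi σ PX i).comp (measurable_pi_apply (σ i)))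
  have hne : (Finset.univ : Finset (Fin M → Fin 2)).Nonempty := Finset.univ_nonempty
  set C := Finset.univ.sup' hne (fun e => |H e|) with hC
  refine Integrable.mono' (integrable_const C) hmeas.aestronglyMeasurable ?_
  refine Filter.Eventually.of_forall fun v => ?_
  rw [Real.norm_eq_abs]
  exact Finset.le_sup' (fun e => |H e|) (mem_univ _)

end model3

theorem jensen_step {α : Type*} [MeasurableSpace α] (μ : Measure α) [IsProbabilityMeasure μ]
    {Y : Type*} [Fintype Y] (qw A : α → Y → ℝ) (c r : Y → ℝ)
    (hqpos : ∀ v y, 0 < qw v y) (hApos : ∀ v y, 0 < A v y) (hcpos : ∀ y, 0 < c y)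
    (hint : ∀ y, Integrable (fun v => qw v y) μ)
    (hint2 : ∀ y, Integrable (fun v => qw v y * A v y) μ)
    (hintf1 : Integrable (fun v => ∑ y, qw v y * Real.log (qw v y / c y)) μ)
    (hintf2 : Integrable (fun v => ∑ y, qw v y * Real.log (qw v y / A v y)) μ)
    (hr : ∀ y, ∫ v, qw v y ∂μ = r y)
    (hrc : ∀ y, ∫ v, qw v y * A v y ∂μ = r y * c y) :
    ∫ v, ∑ y, qw v y * Real.log (qw v y / c y) ∂μ
      ≤ ∫ v, ∑ y, qw v y * Real.log (qw v y / A v y) ∂μ := by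
  have hh2int : ∀ y : Y, Integrable (fun v => qw v y - qw v y * A v y / c y) μ :=
    fun y => (hint y).sub ((hint2 y).div_const (c y))
  have hint3 : Integrable (fun v => ∑ y, (qw v y - qw v y * A v y / c y)) μ :=
    integrable_finset_sum _ fun y _ => hh2int y
  have hzero : ∫ v, ∑ y, (qw v y - qw v y * A v y / c y) ∂μ = 0 := by
    rw [integral_finset_sum _ fun y _ => hh2int y]
    refine Finset.sum_eq_zero fun y _ => ?_
    rw [integral_sub (hint y) ((hint2 y).div_const (c y)), integral_div, hr y, hrc y,
      mul_div_assoc, div_self (hcpos y).ne', mul_one, sub_self]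
  have hptwise : ∀ v, ∑ y, (qw v y - qw v y * A v y / c y)
      ≤ (∑ y, qw v y * Real.log (qw v y / A v y)) - ∑ y, qw v y * Real.log (qw v y / c y) := by
    intro v
    rw [← Finset.sum_sub_distrib]
    refine Finset.sum_le_sum fun y _ => ?_
    have hq := hqpos v y
    have hA := hApos v y
    have hc := hcpos y
    have hlog : Real.log (A v y / c y) ≤ A v y / c y - 1 :=
      Real.log_le_sub_one_of_pos (div_pos hA hc)
    rw [Real.log_div hA.ne' hc.ne'] at hlog
    have e1 : qw v y * Real.log (qw v y / A v y) - qw v y * Real.log (qw v y / c y)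
        = qw v y * (Real.log (c y) - Real.log (A v y)) := by
      rw [Real.log_div hq.ne' hA.ne', Real.log_div hq.ne' hc.ne']; ring
    rw [e1]
    have h2 : 1 - A v y / c y ≤ Real.log (c y) - Real.log (A v y) := by linarith
    calc qw v y - qw v y * A v y / c y = qw v y * (1 - A v y / c y) := by ring
      _ ≤ qw v y * (Real.log (c y) - Real.log (A v y)) :=
          mul_le_mul_of_nonneg_left h2 hq.le
  have hmono := integral_mono hint3 (hintf2.sub hintf1) hptwise
  simp only [Pi.sub_apply] at hmono
  rw [hzero, integral_sub hintf2 hintf1] at hmono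
  linarith

section main

variable {Y S : Type*} [Fintype Y] [Fintype S] [DecidableEq S] {M : ℕ}
variable (Pi : Fin M → ℝ) (σ : Fin M → S) (PX : Fin 2 → S → ℝ) (Q : Y → Fin 2 → S → ℝ)

theorem drift_pointwise (hp : ∀ i, 0 < Pi i) (hQpos : ∀ y x s, 0 < Q y x s)
    (hQsum : ∀ x s, ∑ y, Q y x s = 1) (w : Fin M) (hw1 : Pi w < 1)
    (hne : (univ.erase w).Nonempty) (v : S → ℝ) :
    (∑ y : Y, Q y (enc Pi σ PX w (v (σ w))) (σ w) *
        (llr (post Pi σ PX Q v y w) - llr (Pi w)))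
      = Real.log (1 - Pi w) + ∑ y : Y, Q y (enc Pi σ PX w (v (σ w))) (σ w) *
          Real.log (Q y (enc Pi σ PX w (v (σ w))) (σ w) /
            (∑ j ∈ univ.erase w, Q y (enc Pi σ PX j (v (σ j))) (σ j) * Pi j)) := by
  have hterm : ∀ y : Y, llr (post Pi σ PX Q v y w) - llr (Pi w)
      = Real.log (1 - Pi w) +
        Real.log (Q y (enc Pi σ PX w (v (σ w))) (σ w) /
          (∑ j ∈ univ.erase w, Q y (enc Pi σ PX j (v (σ j))) (σ j) * Pi j)) := by
    intro y
    set q := Q y (enc Pi σ PX w (v (σ w))) (σ w) with hqdef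
    set A := ∑ j ∈ univ.erase w, Q y (enc Pi σ PX j (v (σ j))) (σ j) * Pi j with hAdef
    have hq : 0 < q := hQpos _ _ _
    have hA : 0 < A := Finset.sum_pos (fun j _ => mul_pos (hQpos _ _ _) (hp j)) hne
    have hD : q * Pi w + A = ∑ j, Q y (enc Pi σ PX j (v (σ j))) (σ j) * Pi j := by
      rw [hAdef, hqdef]
      exact Finset.add_sum_erase univ (fun j => Q y (enc Pi σ PX j (v (σ j))) (σ j) * Pi j) (mem_univ w)
    have hDpos : 0 < q * Pi w + A := add_pos (mul_pos hq (hp w)) hA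
    have hDne : q * Pi w + A ≠ 0 := hDpos.ne'
    have hpost : post Pi σ PX Q v y w = q * Pi w / (q * Pi w + A) := by
      unfold post
      rw [← hD]
    have h1post : 1 - post Pi σ PX Q v y w = A / (q * Pi w + A) := by
      rw [hpost]
      field_simp
      ring
    unfold _root_.llr
    rw [h1post, hpost]
    have hfrac : q * Pi w / (q * Pi w + A) / (A / (q * Pi w + A)) = q * Pi w / A := by
      field_simp
    have h1w : (0:ℝ) < 1 - Pi w := by linarith
    rw [hfrac, Real.log_div (mul_pos hq (hp w)).ne' hA.ne', Real.log_mul hq.ne' (hp w).ne',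
      Real.log_div (hp w).ne' h1w.ne', Real.log_div hq.ne' hA.ne']
    ring
  have hsplit : ∀ y : Y, Q y (enc Pi σ PX w (v (σ w))) (σ w) *
        (llr (post Pi σ PX Q v y w) - llr (Pi w))
      = Q y (enc Pi σ PX w (v (σ w))) (σ w) * Real.log (1 - Pi w)
        + Q y (enc Pi σ PX w (v (σ w))) (σ w) *
          Real.log (Q y (enc Pi σ PX w (v (σ w))) (σ w) /
            (∑ j ∈ univ.erase w, Q y (enc Pi σ PX j (v (σ j))) (σ j) * Pi j)) := by
    intro y; rw [hterm y]; ring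
  rw [Finset.sum_congr rfl fun y _ => hsplit y, Finset.sum_add_distrib, ← Finset.sum_mul,
    hQsum _ (σ w), one_mul]

end main

/-- In the one-step transmission model with binary DRPM
encoding, for every `w ∈ [M]`: the quantity
`P̂_Y(y) − Π(w)·Σ_x Q(y|x,σ(w))·ē(x|w)` is strictly positive for every `y`,
and the conditional one-step drift satisfies
`E[L₁ − L₀ | W=w] ≥ log(1−Π(w)) +
  E[ log( Q(Y|X,σ(w)) / (P̂_Y(Y) − Π(w)·Σ_x Q(Y|x,σ(w))·ē(x|w)) ) | W=w ]`,
where conditionally on `W = w` the expectations are written out according to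
the model's joint law (`V ~` i.i.d. uniforms, `X = e(w, V^{σ(w)})`,
`P(Y=y|W,V) = Q(y|X,σ(w))`). -/
theorem conditional_drift_lower_bound
    {Y S : Type*} [Fintype Y] [Fintype S] [DecidableEq S]
    {M : ℕ} (hM : 2 ≤ M)
    (Pi : Fin M → ℝ) (hPi : ∀ i, 0 < Pi i ∧ Pi i < 1) (hPisum : ∑ i, Pi i = 1)
    (σ : Fin M → S)
    (Q : Y → Fin 2 → S → ℝ) (hQpos : ∀ y x s, 0 < Q y x s)
    (hQsum : ∀ x s, ∑ y, Q y x s = 1)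
    (PX : Fin 2 → S → ℝ)
    (hPX : ∀ s, 0 < Bhat Pi σ s → (∀ x, 0 ≤ PX x s) ∧ PX 0 s + PX 1 s = 1)
    (w : Fin M) :
    (∀ y : Y,
      0 < PhatY Pi σ PX Q y - Pi w * ∑ x : Fin 2, Q y x (σ w) * encAvg Pi σ PX w x) ∧
    Real.log (1 - Pi w) +
        ∫ v, (∑ y : Y, Q y (enc Pi σ PX w (v (σ w))) (σ w) *
            Real.log (Q y (enc Pi σ PX w (v (σ w))) (σ w) /
              (PhatY Pi σ PX Q y -
                Pi w * ∑ x : Fin 2, Q y x (σ w) * encAvg Pi σ PX w x)))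
          ∂ uniformPi S
      ≤ ∫ v, (∑ y : Y, Q y (enc Pi σ PX w (v (σ w))) (σ w) *
            (llr (post Pi σ PX Q v y w) - llr (Pi w))) ∂ uniformPi S := by
  have hp : ∀ i, 0 < Pi i := fun i => (hPi i).1
  have hne : (univ.erase w).Nonempty := by
    rw [← Finset.card_pos, Finset.card_erase_of_mem (mem_univ w), Finset.card_univ,
      Fintype.card_fin]
    omega
  have hEnc : ∀ y : Y, (∑ x : Fin 2, Q y x (σ w) * encAvg Pi σ PX w x) = Qbar Pi σ PX Q y w := by
    intro y
    rw [Fin.sum_univ_two, encAvg_zero Pi σ PX hp w, encAvg_one Pi σ PX hp w]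
    unfold Qbar
    ring
  have hkey : ∀ y : Y, PhatY Pi σ PX Q y - Pi w * ∑ x : Fin 2, Q y x (σ w) * encAvg Pi σ PX w x
      = ∑ j ∈ univ.erase w, Pi j * Qbar Pi σ PX Q y j := by
    intro y
    rw [hEnc y, PhatY_eq Pi σ PX Q hp hPX y,
      ← Finset.add_sum_erase _ (fun j => Pi j * Qbar Pi σ PX Q y j) (mem_univ w)]
    ring
  have hcpos : ∀ y : Y,
      0 < PhatY Pi σ PX Q y - Pi w * ∑ x : Fin 2, Q y x (σ w) * encAvg Pi σ PX w x := by
    intro y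
    rw [hkey y]
    exact Finset.sum_pos (fun j _ => mul_pos (hp j) (Qbar_pos Pi σ PX Q hp hQpos y j)) hne
  refine ⟨hcpos, ?_⟩
  -- integrability facts
  have hint : ∀ y : Y, Integrable
      (fun v : S → ℝ => Q y (enc Pi σ PX w (v (σ w))) (σ w)) (uniformPi S) :=
    fun y => integrable_model Pi σ PX (fun e => Q y (e w) (σ w))
  have hint2 : ∀ y : Y, Integrable (fun v : S → ℝ =>
      Q y (enc Pi σ PX w (v (σ w))) (σ w) *
        ∑ j ∈ univ.erase w, Q y (enc Pi σ PX j (v (σ j))) (σ j) * Pi j) (uniformPi S) :=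
    fun y => integrable_model Pi σ PX
      (fun e => Q y (e w) (σ w) * ∑ j ∈ univ.erase w, Q y (e j) (σ j) * Pi j)
  have hintf1 : Integrable (fun v : S → ℝ => ∑ y : Y, Q y (enc Pi σ PX w (v (σ w))) (σ w) *
      Real.log (Q y (enc Pi σ PX w (v (σ w))) (σ w) /
        (PhatY Pi σ PX Q y - Pi w * ∑ x : Fin 2, Q y x (σ w) * encAvg Pi σ PX w x)))
      (uniformPi S) :=
    integrable_model Pi σ PX (fun e => ∑ y : Y, Q y (e w) (σ w) *
      Real.log (Q y (e w) (σ w) /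
        (PhatY Pi σ PX Q y - Pi w * ∑ x : Fin 2, Q y x (σ w) * encAvg Pi σ PX w x)))
  have hintf2 : Integrable (fun v : S → ℝ => ∑ y : Y, Q y (enc Pi σ PX w (v (σ w))) (σ w) *
      Real.log (Q y (enc Pi σ PX w (v (σ w))) (σ w) /
        (∑ j ∈ univ.erase w, Q y (enc Pi σ PX j (v (σ j))) (σ j) * Pi j))) (uniformPi S) :=
    integrable_model Pi σ PX (fun e => ∑ y : Y, Q y (e w) (σ w) *
      Real.log (Q y (e w) (σ w) / (∑ j ∈ univ.erase w, Q y (e j) (σ j) * Pi j)))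
  -- expectation identities
  have hr : ∀ y : Y, ∫ v, Q y (enc Pi σ PX w (v (σ w))) (σ w) ∂ uniformPi S
      = Qbar Pi σ PX Q y w := fun y => integral_Qj Pi σ PX Q hp y w
  have hrc : ∀ y : Y, ∫ v, (Q y (enc Pi σ PX w (v (σ w))) (σ w) *
        ∑ j ∈ univ.erase w, Q y (enc Pi σ PX j (v (σ j))) (σ j) * Pi j) ∂ uniformPi S
      = Qbar Pi σ PX Q y w *
        (PhatY Pi σ PX Q y - Pi w * ∑ x : Fin 2, Q y x (σ w) * encAvg Pi σ PX w x) := by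
    intro y
    have h1 : (fun v : S → ℝ => Q y (enc Pi σ PX w (v (σ w))) (σ w) *
          ∑ j ∈ univ.erase w, Q y (enc Pi σ PX j (v (σ j))) (σ j) * Pi j)
        = fun v : S → ℝ => ∑ j ∈ univ.erase w,
            Q y (enc Pi σ PX w (v (σ w))) (σ w) * Q y (enc Pi σ PX j (v (σ j))) (σ j) * Pi j := by
      funext v
      rw [Finset.mul_sum]
      exact Finset.sum_congr rfl fun j _ => by ring
    rw [h1, integral_finset_sum _ (fun j _ => integrable_model Pi σ PX
      (fun e => Q y (e w) (σ w) * Q y (e j) (σ j) * Pi j))]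
    have h2 : ∀ j ∈ univ.erase w,
        (∫ v, Q y (enc Pi σ PX w (v (σ w))) (σ w) * Q y (enc Pi σ PX j (v (σ j))) (σ j) * Pi j
          ∂ uniformPi S)
        = Qbar Pi σ PX Q y w * Qbar Pi σ PX Q y j * Pi j := by
      intro j hj
      have hjw : w ≠ j := (Finset.ne_of_mem_erase hj).symm
      rw [integral_mul_const, int_pair Pi σ PX Q hp y hjw]
    rw [Finset.sum_congr rfl h2, hkey y]
    rw [Finset.mul_sum]
    exact Finset.sum_congr rfl fun j _ => by ring
  have hdrift := drift_pointwise Pi σ PX Q hp hQpos hQsum w (hPi w).2 hne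
  have hfun : (fun v : S → ℝ => ∑ y : Y, Q y (enc Pi σ PX w (v (σ w))) (σ w) *
        (llr (post Pi σ PX Q v y w) - llr (Pi w)))
      = fun v : S → ℝ => Real.log (1 - Pi w) + ∑ y : Y, Q y (enc Pi σ PX w (v (σ w))) (σ w) *
          Real.log (Q y (enc Pi σ PX w (v (σ w))) (σ w) /
            (∑ j ∈ univ.erase w, Q y (enc Pi σ PX j (v (σ j))) (σ j) * Pi j)) :=
    funext hdrift
  have hRHS : ∫ v, (∑ y : Y, Q y (enc Pi σ PX w (v (σ w))) (σ w) *
        (llr (post Pi σ PX Q v y w) - llr (Pi w))) ∂ uniformPi S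
      = Real.log (1 - Pi w) + ∫ v, (∑ y : Y, Q y (enc Pi σ PX w (v (σ w))) (σ w) *
          Real.log (Q y (enc Pi σ PX w (v (σ w))) (σ w) /
            (∑ j ∈ univ.erase w, Q y (enc Pi σ PX j (v (σ j))) (σ j) * Pi j))) ∂ uniformPi S := by
    rw [hfun, integral_add (integrable_const (Real.log (1 - Pi w))) hintf2, integral_const]
    simp
  rw [hRHS]
  have hJ : ∫ v, (∑ y : Y, Q y (enc Pi σ PX w (v (σ w))) (σ w) *
        Real.log (Q y (enc Pi σ PX w (v (σ w))) (σ w) /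
          (PhatY Pi σ PX Q y - Pi w * ∑ x : Fin 2, Q y x (σ w) * encAvg Pi σ PX w x)))
        ∂ uniformPi S
      ≤ ∫ v, (∑ y : Y, Q y (enc Pi σ PX w (v (σ w))) (σ w) *
          Real.log (Q y (enc Pi σ PX w (v (σ w))) (σ w) /
            (∑ j ∈ univ.erase w, Q y (enc Pi σ PX j (v (σ j))) (σ j) * Pi j))) ∂ uniformPi S :=
    jensen_step (uniformPi S)
      (fun v y => Q y (enc Pi σ PX w (v (σ w))) (σ w))
      (fun v y => ∑ j ∈ univ.erase w, Q y (enc Pi σ PX j (v (σ j))) (σ j) * Pi j)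
      (fun y => PhatY Pi σ PX Q y - Pi w * ∑ x : Fin 2, Q y x (σ w) * encAvg Pi σ PX w x)
      (fun y => Qbar Pi σ PX Q y w)
      (fun v y => hQpos _ _ _)
      (fun v y => Finset.sum_pos (fun j _ => mul_pos (hQpos _ _ _) (hp j)) hne)
      hcpos hint hint2 hintf1 hintf2 hr hrc
  linarith
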